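/- Let a, x₁, x₃, b be nonzero complex numbers with b²a(a−1) + b x₁x₃(a−1) + a x₁²x₃² = 0, and let r̂ be the 3×3 matrix with rows (a, x₁, b), (x₃(a−1)/b, (x₁x₃+b)/b, x₃), (x₁²x₃²/b³, −x₁(ab+x₁x₃)/(ab²), −x₁x₃/(ab)). Then r̂ − 1₃ has rank 1. -/

import Mathlib

/-! `r̂ − 1₃` is the outer product of the column `(1, x₃/b, −(x₁x₃ + ab)/(ab²))` with the row
`(a − 1, x₁, b)`; the constraint is exactly what makes the bottom-left entries agree. An outer
product of two nonzero vectors has rank one. -/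

open Matrix

noncomputable section

/-- The 3×3 central block of the generic ACC solution. -/
def rhat (a x1 x3 b : ℂ) : Matrix (Fin 3) (Fin 3) ℂ :=
  !![a, x1, b;
     x3 * (a - 1) / b, (x1 * x3 + b) / b, x3;
     x1 ^ 2 * x3 ^ 2 / b ^ 3, -(x1 * (a * b + x1 * x3)) / (a * b ^ 2), -(x1 * x3) / (a * b)]

theorem Matrix.rank_vecMulVec_eq_one {K m n : Type*} [Field K] [Fintype n] {w : m → K}
    {v : n → K} (hw : w ≠ 0) (hv : v ≠ 0) : (vecMulVec w v).rank = 1 := by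
  refine (rank_vecMulVec_le w v).antisymm ?_
  obtain ⟨j, hj⟩ := Function.ne_iff.mp hv
  have hcol : v j • w ∈ Submodule.span K (Set.range (vecMulVec w v).col) := by
    rw [← op_smul_eq_smul, ← col_vecMulVec]
    exact Submodule.subset_span (Set.mem_range_self j)
  have := Module.Finite.span_of_finite K (Set.finite_range (vecMulVec w v).col)
  rw [rank_eq_finrank_span_cols, Submodule.one_le_finrank_iff, Submodule.ne_bot_iff]
  exact ⟨_, hcol, smul_ne_zero hj hw⟩

theorem rhat_sub_one_eq_vecMulVec {a x1 x3 b : ℂ} (ha : a ≠ 0) (hb : b ≠ 0)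
    (hcon : b ^ 2 * a * (a - 1) + b * x1 * x3 * (a - 1) + a * x1 ^ 2 * x3 ^ 2 = 0) :
    rhat a x1 x3 b - 1 =
      vecMulVec ![1, x3 / b, -(x1 * x3 + a * b) / (a * b ^ 2)] ![a - 1, x1, b] := by
  have hcorner : x1 ^ 2 * x3 ^ 2 / b ^ 3 = -(x1 * x3 + a * b) / (a * b ^ 2) * (a - 1) := by
    field_simp
    linear_combination hcon
  ext i j
  fin_cases i <;> fin_cases j <;> simp [rhat, vecMulVec_apply, one_apply, hcorner] <;> field_simp <;>
    ring

theorem generic_block_rank_one (a x1 x3 b : ℂ) (ha : a ≠ 0)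
    (hb : b ≠ 0)
    (hcon : b ^ 2 * a * (a - 1) + b * x1 * x3 * (a - 1) + a * x1 ^ 2 * x3 ^ 2 = 0) :
    (rhat a x1 x3 b - 1).rank = 1 := by
  rw [rhat_sub_one_eq_vecMulVec ha hb hcon]
  refine rank_vecMulVec_eq_one (Function.ne_iff.mpr ⟨0, by simp⟩) (Function.ne_iff.mpr ⟨2, ?_⟩)
  simpa using hb
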